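/- There exists an infinite family of real symmetric matrices A (of size 2n+1 for each n ≥ 1) with |A|_∞ = 1 and σ₁(A)² = |A|_∞ · ‖A‖_□ · (2n+1)², showing the bound σ₁(A) ≤ 2√(|A|_∞·‖A‖_□·mn) is tight up to factor 2. Specifically, the matrix with a_{1i} = a_{i1} = 1 for 2 ≤ i ≤ n+1, a_{1i} = a_{i1} = -1 for n+2 ≤ i ≤ 2n+1, and all other entries 0, satisfies σ₁(A) = √(2n) and ‖A‖_□·(2n+1)² = 2n. -/

import Mathlib

open Matrix Finset

/-- The cut-norm of a real square matrix of size `N`. -/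
noncomputable def cutNorm {m n : ℕ} (A : Matrix (Fin m) (Fin n) ℝ) : ℝ :=
  Finset.univ.sup' Finset.univ_nonempty
    (fun p : Finset (Fin m) × Finset (Fin n) =>
      |∑ i ∈ p.1, ∑ j ∈ p.2, A i j| / (m * n))

/-- `|A|_∞ = max_{i,j} |a_{ij}|`. -/
noncomputable def supAbs {m n : ℕ} (A : Matrix (Fin m) (Fin n) ℝ) : ℝ :=
  ⨆ i, ⨆ j, |A i j|

/-- `f` rearranged in decreasing order. -/
noncomputable def sortDesc {N : ℕ} (f : Fin N → ℝ) : Fin N → ℝ :=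
  fun i => f (Tuple.sort f i.rev)

/-- The singular values `σ₁(A) ≥ σ₂(A) ≥ ⋯` of `A` (0-indexed). -/
noncomputable def singVal {m n : ℕ} (A : Matrix (Fin m) (Fin n) ℝ) (i : ℕ) : ℝ :=
  if h : i < n then
    Real.sqrt (sortDesc (Matrix.isHermitian_iff_isSymm.2 (by simp [Matrix.IsSymm, Matrix.transpose_mul]) :
      (Aᵀ * A).IsHermitian).eigenvalues ⟨i, h⟩)
  else 0

/-- First row/column pattern of the extremal matrix: `1` at positions `1,…,n`,
`-1` at positions `n+1,…,2n` (0-indexed), `0` at position `0`. -/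
noncomputable def extremalVec (n : ℕ) (k : ℕ) : ℝ :=
  if 1 ≤ k ∧ k ≤ n then 1 else if n + 1 ≤ k ∧ k ≤ 2 * n then -1 else 0

/-- The symmetric `(2n+1) × (2n+1)` matrix whose first row and column are
`extremalVec n`, all other entries being `0`. -/
noncomputable def extremalMatrix (n : ℕ) : Matrix (Fin (2 * n + 1)) (Fin (2 * n + 1)) ℝ :=
  Matrix.of fun i j =>
    if i = 0 then extremalVec n j else if j = 0 then extremalVec n i else 0


/-! Write `e` for the first unit vector and `v` for the first row of `A`, so that
`A = e vᵀ + v eᵀ` with `e ⊥ v`. Then `G = AᵀA = ‖v‖² e eᵀ + v vᵀ` satisfies `G² = ‖v‖² G`, so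
every eigenvalue of `G` is `0` or `‖v‖² = 2n`, and the largest one is `2n` because `G ≠ 0`.
A rectangle sum of `A` is `[0 ∈ X] ∑_Y v + [0 ∈ Y] ∑_X v`; as `v` has `n` entries `1` and `n`
entries `-1`, each term is at most `n` in absolute value, with equality for `X = Y = {v ≥ 0}`. -/

theorem Matrix.IsHermitian.eigenvalues_eq_zero_or_eq_of_mul_self_eq_smul {ι : Type*}
    [Fintype ι] [DecidableEq ι] {M : Matrix ι ι ℝ} {c : ℝ} (hM : M.IsHermitian)
    (h : M * M = c • M) (i : ι) :
    hM.eigenvalues i = 0 ∨ hM.eigenvalues i = c := by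
  set u := ⇑(hM.eigenvectorBasis i)
  set μ := hM.eigenvalues i
  have hu : M *ᵥ u = μ • u := hM.mulVec_eigenvectorBasis i
  have hu0 : u ≠ 0 := by
    simpa [u] using hM.eigenvectorBasis.orthonormal.ne_zero i
  have key : (μ * (μ - c)) • u = 0 := by
    calc (μ * (μ - c)) • u = (M * M) *ᵥ u - c • (M *ᵥ u) := by
          rw [← mulVec_mulVec, hu, mulVec_smul, hu, smul_smul, smul_smul, ← sub_smul, mul_sub,
            mul_comm c]
      _ = 0 := by rw [h, smul_mulVec, sub_self]
  rcases smul_eq_zero.mp key with hμ | hu'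
  · rcases mul_eq_zero.mp hμ with hμ | hμ
    · exact .inl hμ
    · exact .inr (sub_eq_zero.mp hμ)
  · exact absurd hu' hu0

theorem sortDesc_eq_of_forall_le {N : ℕ} (f : Fin N → ℝ) (hN : 0 < N) {i : Fin N}
    (h : ∀ j, f j ≤ f i) : sortDesc f ⟨0, hN⟩ = f i := by
  refine le_antisymm (h _) ?_
  have hi : (Tuple.sort f).symm i ≤ (⟨0, hN⟩ : Fin N).rev := by
    rw [Fin.le_iff_val_le_val, Fin.val_rev]
    have := ((Tuple.sort f).symm i).isLt
    simp only
    omega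
  simpa [sortDesc] using Tuple.monotone_sort f hi

theorem Matrix.IsHermitian.sortDesc_eigenvalues_of_mul_self_eq_smul {N : ℕ}
    {M : Matrix (Fin N) (Fin N) ℝ} (hM : M.IsHermitian) {c : ℝ} (h : M * M = c • M)
    (hc : 0 ≤ c) (hM0 : M ≠ 0) (hN : 0 < N) : sortDesc hM.eigenvalues ⟨0, hN⟩ = c := by
  have hdich := hM.eigenvalues_eq_zero_or_eq_of_mul_self_eq_smul h
  obtain ⟨i, hi⟩ := Function.ne_iff.mp (mt hM.eigenvalues_eq_zero_iff.mp hM0)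
  have hic : hM.eigenvalues i = c := (hdich i).resolve_left hi
  rw [sortDesc_eq_of_forall_le _ hN (i := i), hic]
  intro j
  rcases hdich j with hj | hj <;> linarith

theorem singVal_zero_of_gram_mul_self_eq_smul {m n : ℕ} {A : Matrix (Fin m) (Fin n) ℝ} {c : ℝ}
    (h : Aᵀ * A * (Aᵀ * A) = c • (Aᵀ * A)) (hc : 0 ≤ c) (hA : A ≠ 0) :
    singVal A 0 = √c := by
  have hn : 0 < n := Nat.pos_of_ne_zero <| by
    rintro rfl
    exact hA (Matrix.ext fun _ j => j.elim0)
  have hG : Aᵀ * A ≠ 0 := by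
    rwa [← conjTranspose_eq_transpose_of_trivial, Ne, conjTranspose_mul_self_eq_zero]
  rw [singVal, dif_pos hn, IsHermitian.sortDesc_eigenvalues_of_mul_self_eq_smul _ h hc hG]

section RankTwo

variable {ι R : Type*} [Fintype ι] [CommRing R] {e v : ι → R}

theorem gram_mul_self_eq_smul_of_eq_vecMulVec_add_vecMulVec {A : Matrix ι ι R}
    (hA : A = vecMulVec e v + vecMulVec v e) (he : e ⬝ᵥ e = 1) (hev : e ⬝ᵥ v = 0) :
    Aᵀ * A * (Aᵀ * A) = (v ⬝ᵥ v) • (Aᵀ * A) := by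
  subst hA
  simp [add_mul, mul_add, vecMulVec_mul_vecMulVec, he, hev, dotProduct_comm v e, smul_smul]

end RankTwo

theorem supAbs_eq_of_forall_abs_le {m n : ℕ} {A : Matrix (Fin m) (Fin n) ℝ} {c : ℝ}
    (hle : ∀ i j, |A i j| ≤ c) (i : Fin m) (j : Fin n) (hij : |A i j| = c) : supAbs A = c := by
  have : Nonempty (Fin m) := ⟨i⟩
  have : Nonempty (Fin n) := ⟨j⟩
  refine le_antisymm (ciSup_le fun i => ciSup_le fun j => hle i j) ?_
  calc c = |A i j| := hij.symm
    _ ≤ ⨆ j, |A i j| := le_ciSup (f := fun j => |A i j|) (Finite.bddAbove_range _) j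
    _ ≤ supAbs A := le_ciSup (f := fun i => ⨆ j, |A i j|) (Finite.bddAbove_range _) i

theorem cutNorm_eq_of_forall_abs_sum_le {m n : ℕ} {A : Matrix (Fin m) (Fin n) ℝ} {c : ℝ}
    (hle : ∀ (X : Finset (Fin m)) (Y : Finset (Fin n)), |∑ i ∈ X, ∑ j ∈ Y, A i j| ≤ c)
    (X : Finset (Fin m)) (Y : Finset (Fin n)) (hXY : |∑ i ∈ X, ∑ j ∈ Y, A i j| = c) :
    cutNorm A = c / (m * n) := by
  refine le_antisymm (sup'_le _ _ fun p _ => ?_) (le_sup'_of_le _ (b := (X, Y)) (mem_univ _) ?_)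
  · exact div_le_div_of_nonneg_right (hle p.1 p.2) (by positivity)
  · rw [hXY]

theorem abs_sum_le_max_sum_posPart_sum_negPart {ι : Type*} [Fintype ι] (f : ι → ℝ)
    (s : Finset ι) : |∑ i ∈ s, f i| ≤ max (∑ i, (f i)⁺) (∑ i, (f i)⁻) := by
  rw [abs_le]
  constructor
  · have : ∑ i ∈ s, -f i ≤ ∑ i, (f i)⁻ :=
      (sum_le_sum fun i _ => neg_le_negPart (f i)).trans
        (sum_le_univ_sum_of_nonneg fun i => negPart_nonneg (f i))
    rw [sum_neg_distrib] at this
    linarith [le_max_right (∑ i, (f i)⁺) (∑ i, (f i)⁻)]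
  · exact ((sum_le_sum fun i _ => le_posPart (f i)).trans
      (sum_le_univ_sum_of_nonneg fun i => posPart_nonneg (f i))).trans (le_max_left _ _)

theorem sum_filter_nonneg_eq_sum_posPart {ι : Type*} (f : ι → ℝ) (s : Finset ι) :
    ∑ i ∈ s with 0 ≤ f i, f i = ∑ i ∈ s, (f i)⁺ := by
  rw [sum_filter]
  refine sum_congr rfl fun i _ => ?_
  split_ifs with h
  · exact (posPart_of_nonneg h).symm
  · exact (posPart_of_nonpos (le_of_not_ge h)).symm

section SingleRankTwo

variable {ι : Type*} [DecidableEq ι] (i₀ : ι) (v : ι → ℝ)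

theorem sum_sum_vecMulVec_single_add (X Y : Finset ι) :
    ∑ i ∈ X, ∑ j ∈ Y, (vecMulVec (Pi.single i₀ 1) v + vecMulVec v (Pi.single i₀ 1)) i j =
      (if i₀ ∈ X then ∑ j ∈ Y, v j else 0) + if i₀ ∈ Y then ∑ i ∈ X, v i else 0 := by
  simp only [Matrix.add_apply, vecMulVec_apply, sum_add_distrib, ← sum_mul_sum, sum_pi_single']
  split_ifs <;> simp

theorem abs_sum_sum_vecMulVec_single_add_le [Fintype ι] (X Y : Finset ι) :
    |∑ i ∈ X, ∑ j ∈ Y, (vecMulVec (Pi.single i₀ 1) v + vecMulVec v (Pi.single i₀ 1)) i j| ≤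
      2 * max (∑ i, (v i)⁺) (∑ i, (v i)⁻) := by
  have hX := abs_sum_le_max_sum_posPart_sum_negPart v X
  have hY := abs_sum_le_max_sum_posPart_sum_negPart v Y
  have hM : 0 ≤ max (∑ i, (v i)⁺) (∑ i, (v i)⁻) := (abs_nonneg _).trans hX
  rw [sum_sum_vecMulVec_single_add]
  refine (abs_add_le _ _).trans ?_
  split_ifs <;> linarith [abs_zero (α := ℝ)]

theorem sum_sum_vecMulVec_single_add_filter_nonneg [Fintype ι] (hv : v i₀ = 0) :
    ∑ i ∈ univ.filter (0 ≤ v ·), ∑ j ∈ univ.filter (0 ≤ v ·),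
      (vecMulVec (Pi.single i₀ 1) v + vecMulVec v (Pi.single i₀ 1)) i j = 2 * ∑ i, (v i)⁺ := by
  have hi₀ : i₀ ∈ univ.filter (0 ≤ v ·) := by simp [hv]
  rw [sum_sum_vecMulVec_single_add, if_pos hi₀, sum_filter_nonneg_eq_sum_posPart]
  ring

end SingleRankTwo

theorem extremalVec_zero (n : ℕ) : extremalVec n 0 = 0 := by simp [extremalVec]

theorem abs_extremalVec_le_one (n k : ℕ) : |extremalVec n k| ≤ 1 := by
  unfold extremalVec; split_ifs <;> norm_num

theorem posPart_extremalVec (n k : ℕ) :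
    (extremalVec n k)⁺ = if k ∈ Icc 1 n then 1 else 0 := by
  unfold extremalVec
  simp only [mem_Icc]
  split_ifs <;> simp

theorem negPart_extremalVec (n k : ℕ) :
    (extremalVec n k)⁻ = if k ∈ Icc (n + 1) (2 * n) then 1 else 0 := by
  unfold extremalVec
  simp only [mem_Icc]
  split_ifs <;> first | omega | simp

theorem extremalVec_mul_self (n k : ℕ) :
    extremalVec n k * extremalVec n k = (extremalVec n k)⁺ + (extremalVec n k)⁻ := by
  rw [posPart_extremalVec, negPart_extremalVec]
  unfold extremalVec
  simp only [mem_Icc]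
  split_ifs <;> first | omega | norm_num

theorem sum_fin_ite_mem_Icc {N a b : ℕ} (hb : b < N) :
    ∑ k : Fin N, (if (k : ℕ) ∈ Icc a b then (1 : ℝ) else 0) = (b + 1 - a : ℕ) := by
  rw [Fin.sum_univ_eq_sum_range (fun k => if k ∈ Icc a b then (1 : ℝ) else 0), sum_boole,
    filter_mem_eq_inter, inter_eq_right.mpr fun k hk => mem_range.mpr (by simp at hk; omega),
    Nat.card_Icc]

noncomputable def extremalCol (n : ℕ) (k : Fin (2 * n + 1)) : ℝ := extremalVec n k

theorem sum_posPart_extremalCol (n : ℕ) : ∑ k, (extremalCol n k)⁺ = n := by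
  simp only [extremalCol, posPart_extremalVec]
  rw [sum_fin_ite_mem_Icc (by omega)]
  simp

theorem sum_negPart_extremalCol (n : ℕ) : ∑ k, (extremalCol n k)⁻ = n := by
  simp only [extremalCol, negPart_extremalVec]
  rw [sum_fin_ite_mem_Icc (by omega)]
  congr 1
  omega

theorem dotProduct_extremalCol_self (n : ℕ) : extremalCol n ⬝ᵥ extremalCol n = 2 * n := by
  calc extremalCol n ⬝ᵥ extremalCol n = ∑ k, ((extremalCol n k)⁺ + (extremalCol n k)⁻) :=
        sum_congr rfl fun k _ => extremalVec_mul_self n k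
    _ = 2 * n := by rw [sum_add_distrib, sum_posPart_extremalCol, sum_negPart_extremalCol]; ring

theorem extremalMatrix_eq_vecMulVec (n : ℕ) :
    extremalMatrix n = vecMulVec (Pi.single 0 1) (extremalCol n) +
      vecMulVec (extremalCol n) (Pi.single 0 1) := by
  ext i j
  rcases eq_or_ne i 0 with rfl | hi <;> rcases eq_or_ne j 0 with rfl | hj <;>
    simp [extremalMatrix, extremalCol, vecMulVec_apply, extremalVec_zero, *]

theorem extremalMatrix_isSymm (n : ℕ) : (extremalMatrix n).IsSymm := by
  rw [Matrix.IsSymm, extremalMatrix_eq_vecMulVec, transpose_add, transpose_vecMulVec,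
    transpose_vecMulVec]
  exact add_comm _ _

theorem supAbs_extremalMatrix {n : ℕ} (hn : 1 ≤ n) : supAbs (extremalMatrix n) = 1 := by
  refine supAbs_eq_of_forall_abs_le (fun i j => ?_) 0 ⟨1, by omega⟩ ?_
  · simp only [extremalMatrix, of_apply]
    split_ifs <;> simp [abs_extremalVec_le_one]
  · simp [extremalMatrix, extremalVec, hn]

theorem cutNorm_extremalMatrix (n : ℕ) :
    cutNorm (extremalMatrix n) * (2 * n + 1) ^ 2 = 2 * n := by
  have hmax := abs_sum_sum_vecMulVec_single_add_le 0 (extremalCol n)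
  have hfilter := sum_sum_vecMulVec_single_add_filter_nonneg 0 (extremalCol n) (extremalVec_zero n)
  simp only [sum_posPart_extremalCol, sum_negPart_extremalCol, max_self] at hmax hfilter
  rw [← extremalMatrix_eq_vecMulVec] at hmax hfilter
  rw [cutNorm_eq_of_forall_abs_sum_le hmax _ _ (by rw [hfilter, abs_of_nonneg (by positivity)])]
  push_cast
  field_simp

theorem singVal_extremalMatrix {n : ℕ} (hn : 1 ≤ n) :
    singVal (extremalMatrix n) 0 = √(2 * n) := by
  refine singVal_zero_of_gram_mul_self_eq_smul ?_ (by positivity) fun h => ?_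
  · rw [gram_mul_self_eq_smul_of_eq_vecMulVec_add_vecMulVec (extremalMatrix_eq_vecMulVec n)
      (by simp) (by simp [extremalCol, extremalVec_zero]), dotProduct_extremalCol_self]
  · have := congr_fun₂ h 0 ⟨1, by omega⟩
    simp [extremalMatrix, extremalVec, hn] at this

/-- For every `n ≥ 1` there is a real symmetric matrix `A` of size `2n+1`
(namely `extremalMatrix n`) with `|A|_∞ = 1`, `σ₁(A) = √(2n)` and
`‖A‖_□ (2n+1)² = 2n`, hence `σ₁(A)² = |A|_∞ ‖A‖_□ (2n+1)²`:  the bound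
`σ₁(A) ≤ 2 √(|A|_∞ ‖A‖_□ m n)` is tight up to the factor `2`. -/
theorem cutNorm_singVal_tight (n : ℕ) (hn : 1 ≤ n) :
    (extremalMatrix n).IsSymm ∧
    supAbs (extremalMatrix n) = 1 ∧
    singVal (extremalMatrix n) 0 = Real.sqrt (2 * n) ∧
    cutNorm (extremalMatrix n) * (2 * n + 1) ^ 2 = 2 * n ∧
    singVal (extremalMatrix n) 0 ^ 2 =
      supAbs (extremalMatrix n) * cutNorm (extremalMatrix n) * (2 * n + 1) ^ 2 := by
  refine ⟨extremalMatrix_isSymm n, supAbs_extremalMatrix hn, singVal_extremalMatrix hn,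
    cutNorm_extremalMatrix n, ?_⟩
  rw [singVal_extremalMatrix hn, supAbs_extremalMatrix hn, one_mul, cutNorm_extremalMatrix,
    Real.sq_sqrt (by positivity)]
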